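/- Let D = d·ℓ² with d a fundamental discriminant, ℓ > 0, and D not a perfect square. Then L(1, ψ_D) = L(1, ψ_d) · (1/ℓ) · ∏_{p | ℓ} [1 + (p - ψ_d(p)) · (p^{ord_p ℓ} - 1)/(p - 1)]. -/

import Mathlib

/-- A fundamental discriminant. -/
def IsFundamentalDiscriminant (d : ℤ) : Prop :=
  (d % 4 = 1 ∧ Squarefree d ∧ d ≠ 1) ∨
    (d % 4 = 0 ∧ Squarefree (d / 4) ∧ (d / 4) % 4 ≠ 1)

/-- The Kronecker symbol `(d | p)` at a prime `p`. -/
noncomputable def kroneckerAtPrime (d : ℤ) (p : ℕ) : ℤ :=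
  if p = 2 then
    (if d % 8 = 1 ∨ d % 8 = 7 then 1 else if d % 8 = 3 ∨ d % 8 = 5 then -1 else 0)
  else if h : p.Prime then @legendreSym p ⟨h⟩ d else 0

/-- The Kronecker symbol `(d | n)` for `n ≥ 1`, extended completely multiplicatively
from its values at primes. -/
noncomputable def kronecker (d : ℤ) (n : ℕ) : ℤ :=
  n.factorization.prod fun p k => (kroneckerAtPrime d p) ^ k

/-!
Let `χ = (d | ·)`, a completely multiplicative function, and `h(n) = ∏_{p ∣ n} (1 - χ p)`;
checking on prime powers gives `h * χ = ζ` (Dirichlet convolution), so for `g ∣ n`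
`χ(n/g) = ∑_{a ∣ g} h(a) χ(n/a)`. Taking `g = gcd(n, ℓ)` and writing `n = a b`, the partial sum
of `L(1, ψ_D)` up to `M` becomes `∑_{a ∣ ℓ} h(a)/a` times the partial sum of `L(1, ψ_d)` up to
`M / a`; letting `M → ∞` gives `L(1, ψ_D) = L(1, ψ_d) ∑_{a ∣ ℓ} h(a)/a`. Finally
`∑_{a ∣ ℓ} h(a)/a = ℓ⁻¹ (h * id)(ℓ)`, and the multiplicative function `h * id` takes the value
`p^e + (1 - χ p)(p^e - 1)/(p - 1)` at `p^e`.
-/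

open Finset ArithmeticFunction Filter Topology
open scoped ArithmeticFunction.zeta

lemma Nat.divisors_gcd {ℓ : ℕ} (hℓ : ℓ ≠ 0) (n : ℕ) :
    (n.gcd ℓ).divisors = {a ∈ ℓ.divisors | a ∣ n} := by
  ext a
  simp [Nat.dvd_gcd_iff, hℓ, Nat.gcd_eq_zero_iff, and_comm]

lemma Nat.sum_Icc_filter_dvd {M : Type*} [AddCommMonoid M] (f : ℕ → M) {a : ℕ} (ha : a ≠ 0)
    (N : ℕ) : ∑ n ∈ Icc 1 N with a ∣ n, f n = ∑ b ∈ Icc 1 (N / a), f (a * b) := by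
  have ha₀ : 0 < a := Nat.pos_of_ne_zero ha
  have himage : {n ∈ Icc 1 N | a ∣ n} = (Icc 1 (N / a)).image (a * ·) := by
    ext n
    simp only [mem_filter, mem_Icc, mem_image]
    constructor
    · rintro ⟨⟨hn, hnN⟩, b, rfl⟩
      exact ⟨b, ⟨Nat.pos_of_mul_pos_left hn,
        (Nat.le_div_iff_mul_le ha₀).mpr (by linarith)⟩, rfl⟩
    · rintro ⟨b, ⟨hb, hbN⟩, rfl⟩
      exact ⟨⟨Nat.mul_pos ha₀ hb, by linarith [(Nat.le_div_iff_mul_le ha₀).mp hbN]⟩,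
        dvd_mul_right a b⟩
  rw [himage, sum_image fun x _ y _ h => Nat.eq_of_mul_eq_mul_left ha₀ h]

namespace ArithmeticFunction

section CommRing

variable {R : Type*} [CommRing R]

def ofMonoidWithZeroHom (χ : ℕ →*₀ R) : ArithmeticFunction R := χ.toZeroHom

@[simp]
lemma ofMonoidWithZeroHom_apply (χ : ℕ →*₀ R) (n : ℕ) :
    ofMonoidWithZeroHom χ n = χ n :=
  rfl

lemma isMultiplicative_ofMonoidWithZeroHom (χ : ℕ →*₀ R) :
    IsMultiplicative (ofMonoidWithZeroHom χ) :=
  ⟨map_one χ, fun _ => map_mul χ _ _⟩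

lemma prodPrimeFactors_one_sub_apply_prime_pow (g : ℕ → R) {p : ℕ} (hp : p.Prime) {k : ℕ}
    (hk : k ≠ 0) : prodPrimeFactors (fun q => 1 - g q) (p ^ k) = 1 - g p := by
  rw [prodPrimeFactors_apply (pow_ne_zero _ hp.ne_zero), Nat.primeFactors_prime_pow hk hp,
    prod_singleton]

lemma prodPrimeFactors_one_sub_mul_apply_prime_pow (g : ℕ → R) (f : ArithmeticFunction R)
    {p : ℕ} (hp : p.Prime) {q : R} (hf : ∀ k, f (p ^ k) = q ^ k) (e : ℕ) :
    (prodPrimeFactors (fun q => 1 - g q) * f) (p ^ e) =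
      q ^ e + (1 - g p) * ∑ k ∈ range e, q ^ k := by
  rw [mul_apply,
    Nat.sum_divisorsAntidiagonal' (fun a b => prodPrimeFactors (fun q => 1 - g q) a * f b),
    Nat.sum_divisors_prime_pow hp, sum_range_succ, mul_sum, add_comm,
    Nat.div_self (pow_pos hp.pos e), (IsMultiplicative.prodPrimeFactors _).map_one, one_mul, hf]
  congr 1
  refine sum_congr rfl fun k hk => ?_
  have hke : k < e := mem_range.mp hk
  rw [Nat.pow_div hke.le hp.pos, prodPrimeFactors_one_sub_apply_prime_pow g hp (by omega), hf]

theorem prodPrimeFactors_one_sub_mul_self (χ : ℕ →*₀ R) :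
    prodPrimeFactors (fun p => 1 - χ p) * ofMonoidWithZeroHom χ = (ζ : ArithmeticFunction R) := by
  refine (IsMultiplicative.eq_iff_eq_on_prime_powers _
    ((IsMultiplicative.prodPrimeFactors _).mul (isMultiplicative_ofMonoidWithZeroHom χ)) _
    isMultiplicative_zeta.natCast).mpr fun p e hp => ?_
  rw [prodPrimeFactors_one_sub_mul_apply_prime_pow _ (ofMonoidWithZeroHom χ) hp
      (fun k => map_pow χ p k),
    mul_neg_geom_sum, natCoe_apply, zeta_apply_ne (pow_ne_zero _ hp.ne_zero)]
  push_cast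
  ring

theorem apply_div_eq_sum_divisors (χ : ℕ →*₀ R) {g n : ℕ} (hgn : g ∣ n) (hn : n ≠ 0) :
    χ (n / g) = ∑ a ∈ g.divisors, prodPrimeFactors (fun p => 1 - χ p) a * χ (n / a) := by
  have hg : g ≠ 0 := ne_zero_of_dvd_ne_zero hn hgn
  set h := prodPrimeFactors fun p => 1 - χ p
  calc χ (n / g) = χ (n / g) * (h * ofMonoidWithZeroHom χ) g := by
        rw [prodPrimeFactors_one_sub_mul_self, natCoe_apply, zeta_apply_ne hg, Nat.cast_one,
          mul_one]
    _ = _ := by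
        rw [mul_apply, Nat.sum_divisorsAntidiagonal (fun a b => h a * ofMonoidWithZeroHom χ b),
          mul_sum]
        refine sum_congr rfl fun a ha => ?_
        rw [ofMonoidWithZeroHom_apply, ← Nat.div_mul_div hgn (Nat.dvd_of_mem_divisors ha),
          map_mul]
        ring

end CommRing

section Field

variable {K : Type*} [Field K]

theorem sum_Icc_apply_div_gcd_div (χ : ℕ →*₀ K) {ℓ : ℕ} (hℓ : ℓ ≠ 0) (N : ℕ) :
    ∑ n ∈ Icc 1 N, χ (n / n.gcd ℓ) / n =
      ∑ a ∈ ℓ.divisors, prodPrimeFactors (fun p => 1 - χ p) a / a *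
        ∑ b ∈ Icc 1 (N / a), χ b / b := by
  set h := prodPrimeFactors fun p => 1 - χ p
  calc ∑ n ∈ Icc 1 N, χ (n / n.gcd ℓ) / n
      = ∑ n ∈ Icc 1 N, ∑ a ∈ ℓ.divisors with a ∣ n, h a * χ (n / a) / n := by
        refine sum_congr rfl fun n hn => ?_
        have hn0 : n ≠ 0 := Nat.one_le_iff_ne_zero.mp (mem_Icc.mp hn).1
        rw [apply_div_eq_sum_divisors χ (Nat.gcd_dvd_left n ℓ) hn0, Nat.divisors_gcd hℓ,
          sum_div]
    _ = ∑ a ∈ ℓ.divisors, ∑ n ∈ Icc 1 N with a ∣ n, h a * χ (n / a) / n := by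
        refine sum_comm' fun n a => ?_
        simp only [mem_filter]
        tauto
    _ = _ := by
        refine sum_congr rfl fun a ha => ?_
        have ha0 : 0 < a := Nat.pos_of_mem_divisors ha
        rw [Nat.sum_Icc_filter_dvd _ ha0.ne', mul_sum]
        refine sum_congr rfl fun b _ => ?_
        rw [Nat.mul_div_cancel_left b ha0, Nat.cast_mul]
        field_simp

theorem tendsto_sum_Icc_apply_div_gcd_div [TopologicalSpace K] [ContinuousAdd K]
    [ContinuousMul K] (χ : ℕ →*₀ K) {ℓ : ℕ} (hℓ : ℓ ≠ 0) {L : K}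
    (hL : Tendsto (fun N => ∑ n ∈ Icc 1 N, χ n / n) atTop (𝓝 L)) :
    Tendsto (fun N => ∑ n ∈ Icc 1 N, χ (n / n.gcd ℓ) / n) atTop
      (𝓝 (L * ∑ a ∈ ℓ.divisors, prodPrimeFactors (fun p => 1 - χ p) a / a)) := by
  simp_rw [sum_Icc_apply_div_gcd_div χ hℓ]
  rw [mul_sum]
  refine tendsto_finsetSum _ fun a ha => ?_
  rw [mul_comm L]
  have ha0 : a ≠ 0 := (Nat.pos_of_mem_divisors ha).ne'
  exact (hL.comp (Nat.tendsto_div_const_atTop ha0)).const_mul _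

lemma prodPrimeFactors_one_sub_mul_id_apply_prime_pow [CharZero K] (g : ℕ → K) {p : ℕ}
    (hp : p.Prime) (e : ℕ) :
    (prodPrimeFactors (fun q => 1 - g q) * (ArithmeticFunction.id : ArithmeticFunction K))
      (p ^ e) = 1 + (p - g p) * (p ^ e - 1) / (p - 1) := by
  have hp1 : (p : K) - 1 ≠ 0 := sub_ne_zero.mpr (by exact_mod_cast hp.ne_one)
  rw [prodPrimeFactors_one_sub_mul_apply_prime_pow g _ hp (q := (p : K)) (fun k => by simp),
    geom_sum_eq (by exact_mod_cast hp.ne_one)]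
  field_simp
  ring

theorem sum_divisors_prodPrimeFactors_one_sub_div [CharZero K] (g : ℕ → K) {ℓ : ℕ}
    (hℓ : ℓ ≠ 0) :
    ∑ a ∈ ℓ.divisors, prodPrimeFactors (fun p => 1 - g p) a / a =
      1 / ℓ * ∏ p ∈ ℓ.primeFactors,
        (1 + (p - g p) * (p ^ ℓ.factorization p - 1) / (p - 1)) := by
  set h := prodPrimeFactors fun p => 1 - g p
  have hmult : IsMultiplicative (h * (ArithmeticFunction.id : ArithmeticFunction K)) :=
    (IsMultiplicative.prodPrimeFactors _).mul isMultiplicative_id.natCast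
  calc ∑ a ∈ ℓ.divisors, h a / a
      = 1 / ℓ * (h * (ArithmeticFunction.id : ArithmeticFunction K)) ℓ := by
        rw [mul_apply, Nat.sum_divisorsAntidiagonal
          (fun a b => h a * (ArithmeticFunction.id : ArithmeticFunction K) b), mul_sum]
        refine sum_congr rfl fun a ha => ?_
        have haK : (a : K) ≠ 0 := Nat.cast_ne_zero.mpr (Nat.pos_of_mem_divisors ha).ne'
        rw [natCoe_apply, id_apply, Nat.cast_div (Nat.dvd_of_mem_divisors ha) haK]
        field_simp
    _ = _ := by
        rw [hmult.multiplicative_factorization _ hℓ, Nat.prod_factorization_eq_prod_primeFactors]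
        exact congrArg _ (prod_congr rfl fun p hp =>
          prodPrimeFactors_one_sub_mul_id_apply_prime_pow g (Nat.prime_of_mem_primeFactors hp) _)

end Field

end ArithmeticFunction

lemma kronecker_mul (d : ℤ) {m n : ℕ} (hm : m ≠ 0) (hn : n ≠ 0) :
    kronecker d (m * n) = kronecker d m * kronecker d n := by
  rw [kronecker, Nat.factorization_mul hm hn,
    Finsupp.prod_add_index' (fun _ => pow_zero _) (fun _ _ _ => pow_add _ _ _)]
  rfl

/-- `kronecker d 0 = 1` (empty product), so `kronecker d` has to be redefined at `0`. -/
noncomputable def kroneckerHom (d : ℤ) : ℕ →*₀ ℂ where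
  toFun n := if n = 0 then 0 else kronecker d n
  map_zero' := if_pos rfl
  map_one' := by simp [kronecker]
  map_mul' m n := by
    by_cases hm : m = 0
    · simp [hm]
    by_cases hn : n = 0
    · simp [hn]
    simp [hm, hn, kronecker_mul d hm hn]

lemma kroneckerHom_apply (d : ℤ) {n : ℕ} (hn : n ≠ 0) : kroneckerHom d n = kronecker d n :=
  if_neg hn

theorem LSeries_psiD_at_one_general (d : ℤ) (ℓ : ℕ) (hℓ : 0 < ℓ) (Ld : ℂ)
    (hLd : Filter.Tendsto (fun M : ℕ => ∑ n ∈ Finset.Icc 1 M, (kronecker d n : ℂ) / n)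
      Filter.atTop (nhds Ld)) :
    Filter.Tendsto
      (fun M : ℕ => ∑ n ∈ Finset.Icc 1 M, (kronecker d (n / n.gcd ℓ) : ℂ) / n)
      Filter.atTop
      (nhds (Ld * (1 / (ℓ : ℂ)) *
        ∏ p ∈ ℓ.primeFactors,
          (1 + ((p : ℂ) - (kronecker d p : ℂ)) *
            ((p : ℂ) ^ (ℓ.factorization p) - 1) / ((p : ℂ) - 1)))) := by
  have hL : Tendsto (fun N : ℕ => ∑ n ∈ Icc 1 N, kroneckerHom d n / (n : ℂ)) atTop (𝓝 Ld) := by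
    refine hLd.congr fun N => sum_congr rfl fun n hn => ?_
    rw [kroneckerHom_apply d (Nat.one_le_iff_ne_zero.mp (mem_Icc.mp hn).1)]
  have key := tendsto_sum_Icc_apply_div_gcd_div (kroneckerHom d) hℓ.ne' hL
  rw [sum_divisors_prodPrimeFactors_one_sub_div _ hℓ.ne', ← mul_assoc] at key
  convert key using 3 with N n hn
  · rw [kroneckerHom_apply d (Nat.div_gcd_pos_of_pos_left ℓ (mem_Icc.mp hn).1).ne']
  · refine prod_congr rfl fun p hp => ?_
    rw [kroneckerHom_apply d (Nat.prime_of_mem_primeFactors hp).ne_zero]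

/-- Let `D = d·ℓ²` with `d` a fundamental discriminant, `ℓ > 0`, and
`D` not a perfect square. Then
`L(1, ψ_D) = L(1, ψ_d) · (1/ℓ) · ∏_{p ∣ ℓ} [1 + (p - ψ_d(p))(p^{ord_p ℓ} - 1)/(p - 1)]`,
where `ψ_D(n) = (d | n/gcd(n,ℓ))` and the values at `z = 1` are the limits of the
partial sums of the (conditionally convergent) Dirichlet series. -/
theorem LSeries_psiD_at_one (D d : ℤ) (ℓ : ℕ)
    (hd : IsFundamentalDiscriminant d) (hℓ : 0 < ℓ) (hdec : D = d * (ℓ : ℤ) ^ 2)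
    (hns : ¬IsSquare D) (Ld : ℂ)
    (hLd : Filter.Tendsto (fun M : ℕ => ∑ n ∈ Finset.Icc 1 M, (kronecker d n : ℂ) / n)
      Filter.atTop (nhds Ld)) :
    Filter.Tendsto
      (fun M : ℕ => ∑ n ∈ Finset.Icc 1 M, (kronecker d (n / n.gcd ℓ) : ℂ) / n)
      Filter.atTop
      (nhds (Ld * (1 / (ℓ : ℂ)) *
        ∏ p ∈ ℓ.primeFactors,
          (1 + ((p : ℂ) - (kronecker d p : ℂ)) *
            ((p : ℂ) ^ (ℓ.factorization p) - 1) / ((p : ℂ) - 1)))) :=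
  LSeries_psiD_at_one_general d ℓ hℓ Ld hLd
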